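/- Let N ≥ 1, u, v, w ∈ ℝ^N, and let F : ℝ^N → ℝ be three times continuously differentiable such that for some C ≥ 0 and p ≥ 1, |F(x)| ≤ C(1 + |x|)^p and the operator norms of DF(x), D²F(x) and D³F(x) are bounded by C(1 + |x|)^p for all x ∈ ℝ^N. Then ∫_{ℝ^N} F(x) ( ⟨x,u⟩⟨x,v⟩⟨x,w⟩ − ⟨u,v⟩⟨x,w⟩ − ⟨u,w⟩⟨x,v⟩ − ⟨v,w⟩⟨x,u⟩ ) dγ_N(x) = ∫_{ℝ^N} D³F(x)(u, v, w) dγ_N(x), where D³F(x) is the third total derivative of F at x, viewed as a trilinear map. -/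

import Mathlib

open MeasureTheory Real
open scoped RealInnerProductSpace

/-- The standard Gaussian probability measure on `ℝ^N` (centred, identity covariance),
given by its density `(2π)^{-N/2} exp(−|x|²/2)` with respect to Lebesgue measure. -/
noncomputable def stdGaussian (N : ℕ) : Measure (EuclideanSpace ℝ (Fin N)) :=
  volume.withDensity fun x =>
    ENNReal.ofReal ((2 * π) ^ (-(N : ℝ) / 2) * Real.exp (-‖x‖ ^ 2 / 2))

/-!
The Gaussian density `ρ` satisfies `∂ₐρ = -⟪x, a⟫ ρ`, so integrating `∂ₐG · hρ` by parts gives the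
adjoint identity `∫ G (⟪x, a⟫ h - ∂ₐh) dγ = ∫ ∂ₐG · h dγ`; the Gaussian weight makes every
function of polynomial growth integrable, which is all the integration by parts needs. The
polynomial in the statement is the Hermite polynomial `δ_w δ_v δ_u 1`, where
`δₐh = ⟪x, a⟫ h - ∂ₐh`, so three applications of the identity move the three derivatives onto `F`.
-/

theorem HasLineDerivAt.mul {𝕜 V : Type*} [NontriviallyNormedField 𝕜] [NormedAddCommGroup V]
    [NormedSpace 𝕜 V] {f g : V → 𝕜} {f' g' : 𝕜} {x v : V}
    (hf : HasLineDerivAt 𝕜 f f' x v) (hg : HasLineDerivAt 𝕜 g g' x v) :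
    HasLineDerivAt 𝕜 (fun y ↦ f y * g y) (f' * g x + f x * g') x v := by
  unfold HasLineDerivAt at *
  simpa using hf.fun_mul hg

theorem hasLineDerivAt_inner_left {V : Type*} [NormedAddCommGroup V] [InnerProductSpace ℝ V]
    (u x v : V) : HasLineDerivAt ℝ (fun y ↦ ⟪y, u⟫) ⟪v, u⟫ x v := by
  simpa [real_inner_comm u] using ((innerSL ℝ u).hasFDerivAt (x := x)).hasLineDerivAt v

theorem ContDiff.hasLineDerivAt_iteratedFDeriv_apply {𝕜 V F : Type*} [NontriviallyNormedField 𝕜]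
    [NormedAddCommGroup V] [NormedSpace 𝕜 V] [NormedAddCommGroup F] [NormedSpace 𝕜 F] {f : V → F}
    {n : WithTop ℕ∞} {k : ℕ} (hf : ContDiff 𝕜 n f) (hk : k < n) (m : Fin k → V) (x a : V) :
    HasLineDerivAt 𝕜 (fun y ↦ iteratedFDeriv 𝕜 k f y m)
      (iteratedFDeriv 𝕜 (k + 1) f x (Fin.cons a m)) x a :=
  ((ContinuousMultilinearMap.apply 𝕜 _ F m).hasFDerivAt.comp x
    ((hf.differentiable_iteratedFDeriv hk) x).hasFDerivAt).hasLineDerivAt a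

theorem one_add_pow_mul_exp_neg_sq_le (k : ℕ) {s : ℝ} (hs : 0 ≤ s) :
    (1 + s) ^ k * exp (-s ^ 2 / 2) ≤ exp (k ^ 2) * exp (-s ^ 2 / 4) := by
  have hpow : (1 + s) ^ k ≤ exp (k * s) := by
    rw [exp_nat_mul]
    gcongr
    linarith [add_one_le_exp s]
  calc (1 + s) ^ k * exp (-s ^ 2 / 2) ≤ exp (k * s) * exp (-s ^ 2 / 2) := by gcongr
    _ ≤ exp (k ^ 2) * exp (-s ^ 2 / 4) := by
      rw [← exp_add, ← exp_add, exp_le_exp]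
      nlinarith [sq_nonneg (s / 2 - k)]

theorem integrable_exp_neg_mul_sq_norm {V : Type*} [NormedAddCommGroup V] [InnerProductSpace ℝ V]
    [FiniteDimensional ℝ V] [MeasurableSpace V] [BorelSpace V] {b : ℝ} (hb : 0 < b) :
    Integrable fun x : V ↦ exp (-b * ‖x‖ ^ 2) := by
  refine (GaussianFourier.integrable_cexp_neg_mul_sq_norm_add (V := V) (b := b)
    (by simpa using hb) 0 0).norm.congr (ae_of_all _ fun x ↦ ?_)
  simp [Complex.norm_exp, ← Complex.ofReal_pow]

section PolyGrowth

variable {V F : Type*} [NormedAddCommGroup V] [NormedAddCommGroup F]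

def PolyGrowth (f : V → F) : Prop :=
  Continuous f ∧ ∃ (k : ℕ), ∃ C ≥ 0, ∀ x, ‖f x‖ ≤ C * (1 + ‖x‖) ^ k

theorem polyGrowth_const (c : F) : PolyGrowth fun _ : V ↦ c :=
  ⟨continuous_const, 0, ‖c‖, norm_nonneg c, fun _ ↦ by simp⟩

theorem PolyGrowth.add {f g : V → F} (hf : PolyGrowth f) (hg : PolyGrowth g) :
    PolyGrowth (f + g) := by
  obtain ⟨hfc, k, C, hC, hfb⟩ := hf
  obtain ⟨hgc, l, D, hD, hgb⟩ := hg
  refine ⟨hfc.add hgc, k + l, C + D, by positivity, fun x ↦ ?_⟩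
  have h1 : 1 ≤ 1 + ‖x‖ := le_add_of_nonneg_right (norm_nonneg x)
  calc ‖f x + g x‖ ≤ C * (1 + ‖x‖) ^ k + D * (1 + ‖x‖) ^ l := norm_add_le_of_le (hfb x) (hgb x)
    _ ≤ C * (1 + ‖x‖) ^ (k + l) + D * (1 + ‖x‖) ^ (k + l) := by
      gcongr <;> first | exact h1 | omega
    _ = (C + D) * (1 + ‖x‖) ^ (k + l) := by ring

theorem PolyGrowth.neg {f : V → F} (hf : PolyGrowth f) : PolyGrowth (-f) := by
  obtain ⟨hfc, k, C, hC, hfb⟩ := hf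
  exact ⟨hfc.neg, k, C, hC, fun x ↦ by simpa using hfb x⟩

theorem PolyGrowth.sub {f g : V → F} (hf : PolyGrowth f) (hg : PolyGrowth g) :
    PolyGrowth (f - g) := by
  simpa [sub_eq_add_neg] using hf.add hg.neg

theorem PolyGrowth.mul {R : Type*} [NormedRing R] {f g : V → R} (hf : PolyGrowth f)
    (hg : PolyGrowth g) : PolyGrowth (f * g) := by
  obtain ⟨hfc, k, C, hC, hfb⟩ := hf
  obtain ⟨hgc, l, D, hD, hgb⟩ := hg
  refine ⟨hfc.mul hgc, k + l, C * D, by positivity, fun x ↦ ?_⟩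
  calc ‖f x * g x‖ ≤ ‖f x‖ * ‖g x‖ := norm_mul_le _ _
    _ ≤ (C * (1 + ‖x‖) ^ k) * (D * (1 + ‖x‖) ^ l) := by
      gcongr
      exacts [hfb x, hgb x]
    _ = C * D * (1 + ‖x‖) ^ (k + l) := by ring

theorem polyGrowth_of_le_rpow {f : V → F} (hf : Continuous f) {C p : ℝ}
    (hb : ∀ x, ‖f x‖ ≤ C * (1 + ‖x‖) ^ p) : PolyGrowth f := by
  have hC : 0 ≤ C := by
    have h0 := hb 0
    rw [norm_zero, add_zero, one_rpow, mul_one] at h0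
    exact (norm_nonneg _).trans h0
  refine ⟨hf, ⌈p⌉₊, C, hC, fun x ↦ (hb x).trans ?_⟩
  rw [← rpow_natCast]
  gcongr
  · exact le_add_of_nonneg_right (norm_nonneg x)
  · exact Nat.le_ceil p

theorem PolyGrowth.continuousMultilinearMap_apply {k : ℕ} {E : Type*} [NormedAddCommGroup E]
    [NormedSpace ℝ E] [NormedSpace ℝ F] {f : V → ContinuousMultilinearMap ℝ (fun _ : Fin k ↦ E) F}
    (hf : PolyGrowth f) (m : Fin k → E) : PolyGrowth fun x ↦ f x m := by
  obtain ⟨hfc, l, C, hC, hfb⟩ := hf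
  refine ⟨(ContinuousMultilinearMap.apply ℝ _ F m).continuous.comp hfc, l, C * ∏ i, ‖m i‖,
    by positivity, fun x ↦ ?_⟩
  calc ‖f x m‖ ≤ ‖f x‖ * ∏ i, ‖m i‖ := (f x).le_opNorm m
    _ ≤ C * (1 + ‖x‖) ^ l * ∏ i, ‖m i‖ := by gcongr; exact hfb x
    _ = C * (∏ i, ‖m i‖) * (1 + ‖x‖) ^ l := by ring

theorem polyGrowth_inner_left {V : Type*} [NormedAddCommGroup V] [InnerProductSpace ℝ V] (a : V) :
    PolyGrowth fun x : V ↦ ⟪x, a⟫ := by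
  refine ⟨by fun_prop, 1, ‖a‖, norm_nonneg a, fun x ↦ ?_⟩
  rw [Real.norm_eq_abs]
  calc |⟪x, a⟫| ≤ ‖x‖ * ‖a‖ := abs_real_inner_le_norm x a
    _ ≤ ‖a‖ * (1 + ‖x‖) ^ 1 := by nlinarith [norm_nonneg a]

end PolyGrowth

section StdGaussian

variable {N : ℕ}

noncomputable def stdGaussianPDF (N : ℕ) (x : EuclideanSpace ℝ (Fin N)) : ℝ :=
  (2 * π) ^ (-(N : ℝ) / 2) * Real.exp (-‖x‖ ^ 2 / 2)

theorem stdGaussianPDF_pos (x : EuclideanSpace ℝ (Fin N)) : 0 < stdGaussianPDF N x := by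
  unfold stdGaussianPDF
  positivity

theorem continuous_stdGaussianPDF : Continuous (stdGaussianPDF N) := by
  unfold stdGaussianPDF
  fun_prop

theorem hasLineDerivAt_stdGaussianPDF (x a : EuclideanSpace ℝ (Fin N)) :
    HasLineDerivAt ℝ (stdGaussianPDF N) (-⟪x, a⟫ * stdGaussianPDF N x) x a := by
  have hsq : HasLineDerivAt ℝ (fun y ↦ ‖y‖ ^ 2) (2 * ⟪x, a⟫) x a := by
    simpa using (hasStrictFDerivAt_norm_sq x).hasFDerivAt.hasLineDerivAt a
  unfold HasLineDerivAt at hsq ⊢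
  refine ((hsq.neg.div_const 2).exp.const_mul ((2 * π) ^ (-(N : ℝ) / 2))).congr_deriv ?_
  simp [stdGaussianPDF]
  ring

theorem stdGaussian_eq_withDensity :
    stdGaussian N = volume.withDensity fun x ↦ ENNReal.ofReal (stdGaussianPDF N x) := rfl

theorem integral_stdGaussian (g : EuclideanSpace ℝ (Fin N) → ℝ) :
    ∫ x, g x ∂stdGaussian N = ∫ x, g x * stdGaussianPDF N x := by
  rw [stdGaussian_eq_withDensity, integral_withDensity_eq_integral_toReal_smul
    continuous_stdGaussianPDF.measurable.ennreal_ofReal (ae_of_all _ fun _ ↦ ENNReal.ofReal_lt_top)]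
  congr 1 with x
  rw [ENNReal.toReal_ofReal (stdGaussianPDF_pos x).le, smul_eq_mul, mul_comm]

theorem integrable_stdGaussian_iff {g : EuclideanSpace ℝ (Fin N) → ℝ} :
    Integrable g (stdGaussian N) ↔ Integrable (fun x ↦ g x * stdGaussianPDF N x) := by
  rw [stdGaussian_eq_withDensity, integrable_withDensity_iff
    continuous_stdGaussianPDF.measurable.ennreal_ofReal (ae_of_all _ fun _ ↦ ENNReal.ofReal_lt_top)]
  simp only [ENNReal.toReal_ofReal (stdGaussianPDF_pos _).le]

theorem integral_mul_inner_mul_sub_stdGaussian {G G' h h' : EuclideanSpace ℝ (Fin N) → ℝ}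
    {a : EuclideanSpace ℝ (Fin N)}
    (hG : ∀ x, HasLineDerivAt ℝ G (G' x) x a) (hh : ∀ x, HasLineDerivAt ℝ h (h' x) x a)
    (hG'h : Integrable (fun x ↦ G' x * h x) (stdGaussian N))
    (hGh' : Integrable (fun x ↦ G x * (⟪x, a⟫ * h x - h' x)) (stdGaussian N))
    (hGh : Integrable (fun x ↦ G x * h x) (stdGaussian N)) :
    ∫ x, G x * (⟪x, a⟫ * h x - h' x) ∂stdGaussian N = ∫ x, G' x * h x ∂stdGaussian N := by
  rw [integrable_stdGaussian_iff] at hG'h hGh' hGh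
  have key := integral_bilinear_hasLineDerivAt_right_eq_neg_left_of_integrable
    (B := ContinuousLinearMap.mul ℝ ℝ) (μ := volume) (f := G) (f' := G')
    (g := fun x ↦ h x * stdGaussianPDF N x)
    (g' := fun x ↦ -((⟪x, a⟫ * h x - h' x) * stdGaussianPDF N x))
    (by simpa only [ContinuousLinearMap.mul_apply', mul_assoc] using hG'h)
    (by simpa only [ContinuousLinearMap.mul_apply', mul_neg, mul_assoc] using hGh'.fun_neg)
    (by simpa only [ContinuousLinearMap.mul_apply', mul_assoc] using hGh)
    (fun x _ ↦ hG x)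
    (fun x _ ↦ HasDerivAt.congr_deriv ((hh x).mul (hasLineDerivAt_stdGaussianPDF x a)) (by ring))
  simp only [ContinuousLinearMap.mul_apply', mul_neg, integral_neg, neg_inj] at key
  simp only [integral_stdGaussian, mul_assoc, key]

theorem integrable_one_add_norm_pow_stdGaussian (k : ℕ) :
    Integrable (fun x : EuclideanSpace ℝ (Fin N) ↦ (1 + ‖x‖) ^ k) (stdGaussian N) := by
  rw [integrable_stdGaussian_iff]
  refine ((integrable_exp_neg_mul_sq_norm (V := EuclideanSpace ℝ (Fin N))
    (b := 1 / 4) (by norm_num)).const_mul ((2 * π) ^ (-(N : ℝ) / 2) * exp (k ^ 2))).mono'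
    (by unfold stdGaussianPDF; fun_prop) (ae_of_all _ fun x ↦ ?_)
  have hbound := one_add_pow_mul_exp_neg_sq_le k (norm_nonneg x)
  rw [Real.norm_of_nonneg (by positivity [(stdGaussianPDF_pos x).le])]
  unfold stdGaussianPDF
  calc (1 + ‖x‖) ^ k * ((2 * π) ^ (-(N : ℝ) / 2) * exp (-‖x‖ ^ 2 / 2))
      = (2 * π) ^ (-(N : ℝ) / 2) * ((1 + ‖x‖) ^ k * exp (-‖x‖ ^ 2 / 2)) := by ring
    _ ≤ (2 * π) ^ (-(N : ℝ) / 2) * (exp (k ^ 2) * exp (-‖x‖ ^ 2 / 4)) := by gcongr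
    _ = _ := by ring_nf

theorem PolyGrowth.integrable_stdGaussian {f : EuclideanSpace ℝ (Fin N) → ℝ} (hf : PolyGrowth f) :
    Integrable f (stdGaussian N) := by
  obtain ⟨hfc, k, C, -, hfb⟩ := hf
  exact ((integrable_one_add_norm_pow_stdGaussian k).const_mul C).mono' hfc.aestronglyMeasurable
    (ae_of_all _ hfb)

theorem integral_mul_inner_mul_sub_stdGaussian_of_polyGrowth
    {G G' h h' : EuclideanSpace ℝ (Fin N) → ℝ} {a : EuclideanSpace ℝ (Fin N)}
    (hG : ∀ x, HasLineDerivAt ℝ G (G' x) x a) (hh : ∀ x, HasLineDerivAt ℝ h (h' x) x a)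
    (hGg : PolyGrowth G) (hG'g : PolyGrowth G') (hhg : PolyGrowth h) (hh'g : PolyGrowth h') :
    ∫ x, G x * (⟪x, a⟫ * h x - h' x) ∂stdGaussian N = ∫ x, G' x * h x ∂stdGaussian N :=
  integral_mul_inner_mul_sub_stdGaussian hG hh (hG'g.mul hhg).integrable_stdGaussian
    (hGg.mul (((polyGrowth_inner_left a).mul hhg).sub hh'g)).integrable_stdGaussian
    (hGg.mul hhg).integrable_stdGaussian

theorem integral_iteratedFDeriv_mul_inner_mul_sub_stdGaussian {k : ℕ} {n : WithTop ℕ∞}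
    {F : EuclideanSpace ℝ (Fin N) → ℝ} (hF : ContDiff ℝ n F) (hk : k < n)
    (hFk : PolyGrowth (iteratedFDeriv ℝ k F)) (hFk' : PolyGrowth (iteratedFDeriv ℝ (k + 1) F))
    (m : Fin k → EuclideanSpace ℝ (Fin N)) {a : EuclideanSpace ℝ (Fin N)}
    {h h' : EuclideanSpace ℝ (Fin N) → ℝ} (hh : ∀ x, HasLineDerivAt ℝ h (h' x) x a)
    (hhg : PolyGrowth h) (hh'g : PolyGrowth h') :
    ∫ x, iteratedFDeriv ℝ k F x m * (⟪x, a⟫ * h x - h' x) ∂stdGaussian N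
      = ∫ x, iteratedFDeriv ℝ (k + 1) F x (Fin.cons a m) * h x ∂stdGaussian N :=
  integral_mul_inner_mul_sub_stdGaussian_of_polyGrowth
    (hF.hasLineDerivAt_iteratedFDeriv_apply hk m · a) hh (hFk.continuousMultilinearMap_apply m) (hFk'.continuousMultilinearMap_apply _) hhg hh'g

end StdGaussian

theorem stmt8_general (N : ℕ) (u v w : EuclideanSpace ℝ (Fin N))
    (F : EuclideanSpace ℝ (Fin N) → ℝ) (hF : ContDiff ℝ 3 F)
    (C p : ℝ)
    (hF_bound : ∀ x, |F x| ≤ C * (1 + ‖x‖) ^ p)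
    (hDF_bound : ∀ k, 1 ≤ k → k ≤ 3 → ∀ x, ‖iteratedFDeriv ℝ k F x‖ ≤ C * (1 + ‖x‖) ^ p) :
    ∫ x, F x * (⟪x, u⟫ * ⟪x, v⟫ * ⟪x, w⟫ - ⟪u, v⟫ * ⟪x, w⟫
        - ⟪u, w⟫ * ⟪x, v⟫ - ⟪v, w⟫ * ⟪x, u⟫) ∂(stdGaussian N)
      = ∫ x, iteratedFDeriv ℝ 3 F x ![u, v, w] ∂(stdGaussian N) := by
  have hDF : ∀ k ≤ 3, PolyGrowth (iteratedFDeriv ℝ k F) := by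
    intro k hk
    refine polyGrowth_of_le_rpow (C := C) (p := p)
      (hF.continuous_iteratedFDeriv (by exact_mod_cast hk)) ?_
    rcases Nat.eq_zero_or_pos k with rfl | hk0
    · simpa [norm_iteratedFDeriv_zero] using hF_bound
    · exact hDF_bound k hk0 hk
  have step := fun k (hk : k < 3) ↦ integral_iteratedFDeriv_mul_inner_mul_sub_stdGaussian hF
    (by exact_mod_cast hk) (hDF k hk.le) (hDF (k + 1) hk)
  have hu := polyGrowth_inner_left u
  have hv := polyGrowth_inner_left v
  calc _ = ∫ x, iteratedFDeriv ℝ 0 F x ![] * (⟪x, w⟫ * (⟪x, v⟫ * ⟪x, u⟫ - ⟪v, u⟫)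
          - (⟪w, v⟫ * ⟪x, u⟫ + ⟪x, v⟫ * ⟪w, u⟫)) ∂stdGaussian N := by
        congr 1 with x
        simp only [iteratedFDeriv_zero_apply, real_inner_comm]
        ring
    _ = ∫ x, iteratedFDeriv ℝ 1 F x ![w] * (⟪x, v⟫ * ⟪x, u⟫ - ⟪v, u⟫) ∂stdGaussian N :=
        step 0 (by norm_num) _ (fun x ↦ ((hasLineDerivAt_inner_left v x w).mul
          (hasLineDerivAt_inner_left u x w)).sub_const ⟪v, u⟫)
          ((hv.mul hu).sub (polyGrowth_const _))
          (((polyGrowth_const _).mul hu).add (hv.mul (polyGrowth_const _)))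
    _ = ∫ x, iteratedFDeriv ℝ 2 F x ![v, w] * ⟪x, u⟫ ∂stdGaussian N :=
        step 1 (by norm_num) _ (hasLineDerivAt_inner_left u · v) hu (polyGrowth_const _)
    _ = ∫ x, iteratedFDeriv ℝ 2 F x ![v, w] * (⟪x, u⟫ * 1 - 0) ∂stdGaussian N := by simp
    _ = ∫ x, iteratedFDeriv ℝ 3 F x ![u, v, w] * 1 ∂stdGaussian N :=
        step 2 (by norm_num) _ (fun _ ↦ hasDerivAt_const _ _) (polyGrowth_const _)
          (polyGrowth_const _)
    _ = _ := by simp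

/-- Gaussian integration by parts (third order): if `F : ℝ^N → ℝ` is `C³` with
`|F(x)| ≤ C(1+|x|)^p` and `‖D^k F(x)‖ ≤ C(1+|x|)^p` for `k = 1, 2, 3`, then
`∫ F(x)(⟨x,u⟩⟨x,v⟩⟨x,w⟩ − ⟨u,v⟩⟨x,w⟩ − ⟨u,w⟩⟨x,v⟩ − ⟨v,w⟩⟨x,u⟩) dγ_N
  = ∫ D³F(x)(u,v,w) dγ_N`. -/
theorem stmt8 (N : ℕ) (hN : 1 ≤ N) (u v w : EuclideanSpace ℝ (Fin N))
    (F : EuclideanSpace ℝ (Fin N) → ℝ) (hF : ContDiff ℝ 3 F)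
    (C p : ℝ) (hC : 0 ≤ C) (hp : 1 ≤ p)
    (hF_bound : ∀ x, |F x| ≤ C * (1 + ‖x‖) ^ p)
    (hDF_bound : ∀ k, 1 ≤ k → k ≤ 3 → ∀ x, ‖iteratedFDeriv ℝ k F x‖ ≤ C * (1 + ‖x‖) ^ p) :
    ∫ x, F x * (⟪x, u⟫ * ⟪x, v⟫ * ⟪x, w⟫ - ⟪u, v⟫ * ⟪x, w⟫
        - ⟪u, w⟫ * ⟪x, v⟫ - ⟪v, w⟫ * ⟪x, u⟫) ∂(stdGaussian N)
      = ∫ x, iteratedFDeriv ℝ 3 F x ![u, v, w] ∂(stdGaussian N) :=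
  stmt8_general N u v w F hF C p hF_bound hDF_bound
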